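/- The expected number of β-redexes in a uniformly random λυ-term of size n is asymptotically 3n/64, i.e., E(X_n)/n → 3/64, where X_n counts subterms of the form (λa)b. -/

import Mathlib

open Finset Filter

mutual
inductive Tm : Type
  | idx : Nat → Tm
  | lam : Tm → Tm
  | app : Tm → Tm → Tm
  | clos : Tm → Subst → Tm
inductive Subst : Type
  | slash : Tm → Subst
  | lift : Subst → Subst
  | shift : Subst
end

mutual
/-- Natural size of a λυ-term: every constructor weighs 1; index n has size n+1. -/
def Tm.size : Tm → Nat
  | .idx n => n + 1
  | .lam a => Tm.size a + 1
  | .app a b => Tm.size a + Tm.size b + 1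
  | .clos a s => Tm.size a + Subst.size s + 1
/-- Natural size of an explicit substitution. -/
def Subst.size : Subst → Nat
  | .slash a => Tm.size a + 1
  | .lift s => Subst.size s + 1
  | .shift => 1
end

/-- Number of λυ-terms of size `n`. -/
noncomputable def tcount (n : ℕ) : ℕ := Nat.card {a : Tm // Tm.size a = n}

/-- Number of explicit substitutions of size `n`. -/
noncomputable def scount (n : ℕ) : ℕ := Nat.card {s : Subst // Subst.size s = n}

/-- Expected value of the statistic `f` on a uniformly random λυ-term of size `n`
(the statistic is assumed to be bounded by the size, so summing `k` up to `n` suffices). -/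
noncomputable def expectTm (f : Tm → ℕ) (n : ℕ) : ℝ :=
  (∑ k ∈ Finset.range (n + 1),
      (k : ℝ) * (Nat.card {a : Tm // Tm.size a = n ∧ f a = k} : ℝ)) / (tcount n : ℝ)

mutual
/-- Number of (beta)-redexes occurring in a λυ-term. -/
def Tm.betaCount : Tm → ℕ
  | .idx _ => 0
  | .lam a => Tm.betaCount a
  | .app (.lam a) b => Tm.betaCount a + Tm.betaCount b + 1
  | .app a b => Tm.betaCount a + Tm.betaCount b
  | .clos a s => Tm.betaCount a + Subst.betaCount s
/-- Number of (beta)-redexes occurring in a substitution. -/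
def Subst.betaCount : Subst → ℕ
  | .slash a => Tm.betaCount a
  | .lift s => Subst.betaCount s
  | .shift => 0
end

/-!
Decomposing terms and substitutions by their root constructor turns the size generating functions
`T` (terms), `S` (substitutions) and the redex-weighted series `B` into algebraic equations.
Eliminating `S` gives `T = X + 2XT + XT²`, so `T + 1` solves `C = 1 + XC²`: it is the Catalan
series, and there are `catalan n` terms of each size `n ≥ 1`. Eliminating the redex series of
substitutions leaves `B (1 - 2XC) = (1 - X) (XT)²`, while differentiating `C = 1 + XC²` shows
`(XC)' (1 - 2XC) = 1`. Together they give `2B = (1 - X) (1 - 4X + 2X²) (XC)' - (1 - X) (1 - 2X)`,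
so the total number of redexes over terms of size `n` is a fixed combination of the numbers
`(k + 1) catalan k` with `n - 3 ≤ k ≤ n`. The ratio
`catalan (k + 1) / catalan k = 2 (2k + 1) / (k + 2)` then makes the mean an explicit rational
function of `n`, of order `3n / 64`.
-/

open PowerSeries

section SizeGF

variable {α β : Type*}

def pairSizeEquivSigma (f : α → ℕ) (g : β → ℕ) (n : ℕ) :
    {p : α × β // f p.1 + g p.2 = n} ≃
      Σ ij : antidiagonal n, {a : α // f a = ij.1.1} × {b : β // g b = ij.1.2} where
  toFun p :=
    ⟨⟨(f p.1.1, g p.1.2), mem_antidiagonal.2 p.2⟩, ⟨p.1.1, rfl⟩, ⟨p.1.2, rfl⟩⟩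
  invFun x := ⟨(x.2.1, x.2.2), by rw [x.2.1.2, x.2.2.2]; exact mem_antidiagonal.1 x.1.2⟩
  left_inv _ := rfl
  right_inv := by
    rintro ⟨⟨⟨i, j⟩, h⟩, ⟨a, ha⟩, ⟨b, hb⟩⟩
    dsimp only at ha hb
    subst ha hb
    rfl

theorem finite_pairSize {f : α → ℕ} {g : β → ℕ} {n : ℕ}
    (hf : ∀ k ≤ n, Finite {a : α // f a = k}) (hg : ∀ k ≤ n, Finite {b : β // g b = k}) :
    Finite {p : α × β // f p.1 + g p.2 = n} := by
  have (ij : antidiagonal n) : Finite ({a : α // f a = ij.1.1} × {b : β // g b = ij.1.2}) := by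
    have := mem_antidiagonal.1 ij.2
    have := hf ij.1.1 (by omega)
    have := hg ij.1.2 (by omega)
    infer_instance
  exact Finite.of_equiv _ (pairSizeEquivSigma f g n).symm

variable (f : α → ℕ) (g : β → ℕ) [∀ n, Fintype {a : α // f a = n}]
  [∀ n, Fintype {b : β // g b = n}]

noncomputable instance (n : ℕ) : Fintype {p : α × β // f p.1 + g p.2 = n} :=
  Fintype.ofEquiv _ (pairSizeEquivSigma f g n).symm

noncomputable def sizeGF (u : α → ℤ) : ℤ⟦X⟧ :=
  mk fun n => ∑ a : {a : α // f a = n}, u a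

@[simp]
theorem coeff_sizeGF (u : α → ℤ) (n : ℕ) :
    coeff n (sizeGF f u) = ∑ a : {a : α // f a = n}, u a :=
  coeff_mk _ _

theorem sizeGF_add (u v : α → ℤ) :
    sizeGF f (fun a => u a + v a) = sizeGF f u + sizeGF f v := by
  ext n; simp [sum_add_distrib]

theorem sizeGF_mul (u : α → ℤ) (v : β → ℤ) :
    sizeGF f u * sizeGF g v =
      sizeGF (fun p : α × β => f p.1 + g p.2) (fun p => u p.1 * v p.2) := by
  ext n
  rw [coeff_mul, coeff_sizeGF, ← (pairSizeEquivSigma f g n).symm.sum_comp, Fintype.sum_sigma,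
    ← sum_coe_sort (antidiagonal n)]
  refine sum_congr rfl fun ij _ => ?_
  simp [Fintype.sum_prod_type, sum_mul_sum, pairSizeEquivSigma]

@[simp]
theorem sizeGF_zero : sizeGF f (fun _ => 0) = 0 := by ext; simp

theorem sizeGF_fst (u : α → ℤ) :
    sizeGF (fun p : α × β => f p.1 + g p.2) (fun p => u p.1) =
      sizeGF f u * sizeGF g fun _ => 1 := by
  simp [sizeGF_mul]

theorem sizeGF_snd (v : β → ℤ) :
    sizeGF (fun p : α × β => f p.1 + g p.2) (fun p => v p.2) =
      (sizeGF f fun _ => 1) * sizeGF g v := by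
  simp [sizeGF_mul]

end SizeGF

@[simp]
theorem PowerSeries.mk_zero {R : Type*} [Semiring R] : (PowerSeries.mk fun _ => (0 : R)) = 0 :=
  rfl

theorem PowerSeries.eq_zero_of_eq_X_mul {R : Type*} [Semiring R] {H K : R⟦X⟧}
    (h : H = X * (H * K)) : H = 0 := by
  have hdvd (k : ℕ) : X ^ k ∣ H := by
    induction k with
    | zero => exact one_dvd H
    | succ k ih => rw [h, pow_succ']; exact mul_dvd_mul_left X (dvd_mul_of_dvd_left ih K)
  ext n
  exact X_pow_dvd_iff.1 (hdvd (n + 1)) n n.lt_succ_self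

theorem PowerSeries.eq_of_eq_one_add_X_mul_sq {R : Type*} [CommRing R] {F G : R⟦X⟧}
    (hF : F = 1 + X * F ^ 2) (hG : G = 1 + X * G ^ 2) : F = G :=
  sub_eq_zero.1 <| eq_zero_of_eq_X_mul (K := F + G) (by linear_combination hF - hG)

theorem add_two_mul_catalan_succ (n : ℕ) :
    (n + 2) * catalan (n + 1) = 2 * (2 * n + 1) * catalan n := by
  apply Nat.eq_of_mul_eq_mul_left n.succ_pos
  calc (n + 1) * ((n + 2) * catalan (n + 1)) = (n + 1) * (n + 1).centralBinom := by
        rw [← succ_mul_catalan_eq_centralBinom]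
    _ = 2 * (2 * n + 1) * n.centralBinom := Nat.succ_mul_centralBinom_succ n
    _ = (n + 1) * (2 * (2 * n + 1) * catalan n) := by
        rw [← succ_mul_catalan_eq_centralBinom]; ring

theorem catalan_pos (n : ℕ) : 0 < catalan n :=
  Nat.pos_of_ne_zero fun h => n.centralBinom_ne_zero <| by
    rw [← succ_mul_catalan_eq_centralBinom, h, mul_zero]

noncomputable def catalanGF : ℤ⟦X⟧ := PowerSeries.map (Nat.castRingHom ℤ) catalanSeries

@[simp]
theorem coeff_catalanGF (n : ℕ) : coeff n catalanGF = catalan n := by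
  simp [catalanGF]

theorem catalanGF_eq : catalanGF = 1 + X * catalanGF ^ 2 := by
  have h := congrArg (PowerSeries.map (Nat.castRingHom ℤ)) catalanSeries_sq_mul_X_add_one
  simp only [map_add, map_mul, map_pow, map_X, map_one] at h
  unfold catalanGF
  linear_combination -h

theorem derivative_X_mul_catalanGF_mul :
    d⁄dX ℤ (X * catalanGF) * (1 - 2 * X * catalanGF) = 1 := by
  have hd := congrArg (d⁄dX ℤ) catalanGF_eq
  simp only [map_add, derivative_one, Derivation.leibniz, Derivation.leibniz_pow, derivative_X,
    smul_eq_mul] at hd ⊢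
  linear_combination X * hd + catalanGF_eq

theorem coeff_derivative_X_mul_catalanGF (n : ℕ) :
    coeff n (d⁄dX ℤ (X * catalanGF)) = (n + 1) * catalan n := by
  rw [coeff_derivative, coeff_succ_X_mul, coeff_catalanGF]
  ring

theorem Tm.size_pos (a : Tm) : 0 < a.size := by cases a <;> simp [Tm.size]

theorem Subst.size_pos (s : Subst) : 0 < s.size := by cases s <;> simp [Subst.size]

def Tm.isLam : Tm → Bool
  | .lam _ => true
  | _ => false

theorem Tm.betaCount_app (a b : Tm) :
    (Tm.app a b).betaCount = a.betaCount + b.betaCount + a.isLam.toNat := by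
  cases a <;> simp [Tm.betaCount, Tm.isLam]

mutual
theorem Tm.betaCount_le_size : ∀ a : Tm, a.betaCount ≤ a.size
  | .idx _ => by simp [Tm.betaCount]
  | .lam a => by
    have := Tm.betaCount_le_size a
    simp only [Tm.betaCount, Tm.size]; omega
  | .app a b => by
    have := Tm.betaCount_le_size a; have := Tm.betaCount_le_size b; have := a.isLam.toNat_le
    rw [Tm.betaCount_app, Tm.size]; omega
  | .clos a s => by
    have := Tm.betaCount_le_size a; have := Subst.betaCount_le_size s
    simp only [Tm.betaCount, Tm.size]; omega
theorem Subst.betaCount_le_size : ∀ s : Subst, s.betaCount ≤ s.size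
  | .slash a => by
    have := Tm.betaCount_le_size a
    simp only [Subst.betaCount, Subst.size]; omega
  | .lift s => by
    have := Subst.betaCount_le_size s
    simp only [Subst.betaCount, Subst.size]; omega
  | .shift => by simp [Subst.betaCount]
end

def Tm.sizeSuccEquiv (n : ℕ) : {a : Tm // a.size = n + 1} ≃
    Unit ⊕ {a : Tm // a.size = n} ⊕ {p : Tm × Tm // p.1.size + p.2.size = n}
      ⊕ {p : Tm × Subst // p.1.size + p.2.size = n} where
  toFun
    | ⟨.idx _, _⟩ => .inl ()
    | ⟨.lam a, h⟩ => .inr (.inl ⟨a, by simpa [Tm.size] using h⟩)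
    | ⟨.app a b, h⟩ => .inr (.inr (.inl ⟨(a, b), by simpa [Tm.size] using h⟩))
    | ⟨.clos a s, h⟩ => .inr (.inr (.inr ⟨(a, s), by simpa [Tm.size] using h⟩))
  invFun
    | .inl _ => ⟨.idx n, rfl⟩
    | .inr (.inl a) => ⟨.lam a, by simp [Tm.size, a.2]⟩
    | .inr (.inr (.inl p)) => ⟨.app p.1.1 p.1.2, by simp [Tm.size, p.2]⟩
    | .inr (.inr (.inr p)) => ⟨.clos p.1.1 p.1.2, by simp [Tm.size, p.2]⟩
  left_inv
    | ⟨.idx m, h⟩ => by obtain rfl : m = n := by simpa [Tm.size] using h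
                        rfl
    | ⟨.lam _, _⟩ | ⟨.app _ _, _⟩ | ⟨.clos _ _, _⟩ => rfl
  right_inv := by rintro (_ | _ | _ | _) <;> rfl

def Subst.sizeSuccEquiv (n : ℕ) : {s : Subst // s.size = n + 1} ≃
    {a : Tm // a.size = n} ⊕ {s : Subst // s.size = n} ⊕ PLift (n = 0) where
  toFun
    | ⟨.slash a, h⟩ => .inl ⟨a, by simpa [Subst.size] using h⟩
    | ⟨.lift s, h⟩ => .inr (.inl ⟨s, by simpa [Subst.size] using h⟩)
    | ⟨.shift, h⟩ => .inr (.inr ⟨by simpa [Subst.size] using h.symm⟩)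
  invFun
    | .inl a => ⟨.slash a, by simp [Subst.size, a.2]⟩
    | .inr (.inl s) => ⟨.lift s, by simp [Subst.size, s.2]⟩
    | .inr (.inr h) => ⟨.shift, by simp [Subst.size, h.down]⟩
  left_inv := by rintro ⟨_ | _ | _, _⟩ <;> rfl
  right_inv := by rintro (_ | _ | _) <;> rfl

instance : IsEmpty {a : Tm // a.size = 0} := ⟨fun a => a.1.size_pos.ne' a.2⟩

instance : IsEmpty {s : Subst // s.size = 0} := ⟨fun s => s.1.size_pos.ne' s.2⟩

theorem finite_of_size (n : ℕ) :
    Finite {a : Tm // a.size = n} ∧ Finite {s : Subst // s.size = n} := by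
  induction n using Nat.strong_induction_on with
  | _ n ih =>
    cases n with
    | zero => exact ⟨inferInstance, inferInstance⟩
    | succ n =>
      have hT k (hk : k ≤ n) := (ih k (by omega)).1
      have hS k (hk : k ≤ n) := (ih k (by omega)).2
      have := hT n le_rfl
      have := hS n le_rfl
      have := finite_pairSize hT hT
      have := finite_pairSize hT hS
      exact ⟨.of_equiv _ (Tm.sizeSuccEquiv n).symm, .of_equiv _ (Subst.sizeSuccEquiv n).symm⟩

noncomputable instance (n : ℕ) : Fintype {a : Tm // a.size = n} :=
  have := (finite_of_size n).1
  Fintype.ofFinite _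

noncomputable instance (n : ℕ) : Fintype {s : Subst // s.size = n} :=
  have := (finite_of_size n).2
  Fintype.ofFinite _

theorem Tm.sizeGF_eq (u : Tm → ℤ) :
    sizeGF Tm.size u = X * PowerSeries.mk (fun n => u (.idx n))
      + X * sizeGF Tm.size (fun a => u a.lam)
      + X * sizeGF (fun p : Tm × Tm => p.1.size + p.2.size) (fun p => u (.app p.1 p.2))
      + X * sizeGF (fun p : Tm × Subst => p.1.size + p.2.size) (fun p => u (.clos p.1 p.2)) := by
  ext n
  cases n with
  | zero => simp
  | succ n =>
    simp only [map_add, coeff_succ_X_mul, coeff_sizeGF, coeff_mk,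
      ← (Tm.sizeSuccEquiv n).symm.sum_comp, Fintype.sum_sum_type]
    simp [Tm.sizeSuccEquiv, add_assoc]

theorem Subst.sizeGF_eq (u : Subst → ℤ) :
    sizeGF Subst.size u = X * sizeGF Tm.size (fun a => u (.slash a))
      + X * sizeGF Subst.size (fun s => u s.lift) + X * C (u .shift) := by
  ext n
  cases n with
  | zero => simp
  | succ n =>
    simp only [map_add, coeff_succ_X_mul, coeff_sizeGF, coeff_C,
      ← (Subst.sizeSuccEquiv n).symm.sum_comp, Fintype.sum_sum_type]
    cases n <;> simp [Subst.sizeSuccEquiv]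

noncomputable def termGF : ℤ⟦X⟧ := sizeGF Tm.size fun _ => 1

noncomputable def substGF : ℤ⟦X⟧ := sizeGF Subst.size fun _ => 1

noncomputable def redexGF : ℤ⟦X⟧ := sizeGF Tm.size fun a => a.betaCount

noncomputable def substRedexGF : ℤ⟦X⟧ := sizeGF Subst.size fun s => s.betaCount

theorem substGF_eq : substGF = X * termGF + X * substGF + X := by
  simpa [termGF, substGF] using Subst.sizeGF_eq fun _ => 1

theorem termGF_eq :
    termGF = X * PowerSeries.mk 1 + X * termGF + X * termGF ^ 2 + X * (termGF * substGF) := by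
  have h := Tm.sizeGF_eq fun _ => 1
  rw [sizeGF_fst Tm.size Tm.size fun _ => 1, sizeGF_fst Tm.size Subst.size fun _ => 1] at h
  simpa [termGF, substGF, sq, Pi.one_def] using h

theorem sizeGF_isLam : sizeGF Tm.size (fun a => (a.isLam.toNat : ℤ)) = X * termGF := by
  simpa [Tm.isLam, termGF] using Tm.sizeGF_eq fun a => a.isLam.toNat

theorem substRedexGF_eq : substRedexGF = X * redexGF + X * substRedexGF := by
  simpa [Subst.betaCount, redexGF, substRedexGF] using Subst.sizeGF_eq fun s => s.betaCount

theorem redexGF_eq :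
    redexGF = X * redexGF + X * (2 * redexGF * termGF + X * termGF * termGF)
      + X * (redexGF * substGF + termGF * substRedexGF) := by
  have h := Tm.sizeGF_eq fun a => a.betaCount
  simp only [Tm.betaCount_app, Tm.betaCount, Nat.cast_add, sizeGF_add] at h
  rw [sizeGF_fst Tm.size Tm.size fun a => (a.betaCount : ℤ),
    sizeGF_fst Tm.size Subst.size fun a => (a.betaCount : ℤ),
    sizeGF_snd Tm.size Tm.size fun a => (a.betaCount : ℤ),
    sizeGF_snd Tm.size Subst.size fun s => (s.betaCount : ℤ),
    sizeGF_fst Tm.size Tm.size fun a => (a.isLam.toNat : ℤ), sizeGF_isLam] at h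
  simp only [Nat.cast_zero, PowerSeries.mk_zero] at h
  unfold redexGF substRedexGF substGF termGF at *
  linear_combination h

theorem termGF_quadratic : termGF = X + 2 * X * termGF + X * termGF ^ 2 := by
  linear_combination
    (1 - X) * termGF_eq + X * termGF * substGF_eq + X * mk_one_mul_one_sub_eq_one ℤ

theorem termGF_add_one : termGF + 1 = catalanGF :=
  eq_of_eq_one_add_X_mul_sq (by linear_combination termGF_quadratic) catalanGF_eq

theorem redexGF_mul : redexGF * (1 - 2 * X * catalanGF) = (1 - X) * (X * termGF) ^ 2 := by
  linear_combination (1 - X) * redexGF_eq + X * redexGF * substGF_eq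
    + X * termGF * substRedexGF_eq + 2 * X * redexGF * termGF_add_one

theorem two_mul_redexGF :
    2 * redexGF = (1 - X) * (1 - 4 * X + 2 * X ^ 2) * d⁄dX ℤ (X * catalanGF)
      - (1 - X) * (1 - 2 * X) := by
  have hsq :
      2 * (X * termGF) ^ 2 = 1 - 4 * X + 2 * X ^ 2 - (1 - 2 * X) * (1 - 2 * X * catalanGF) := by
    linear_combination 2 * X ^ 2 * (termGF + catalanGF - 1) * termGF_add_one - 2 * X * catalanGF_eq
  linear_combination (-2 * redexGF - (1 - X) * (1 - 2 * X)) * derivative_X_mul_catalanGF_mul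
    + 2 * d⁄dX ℤ (X * catalanGF) * redexGF_mul + (1 - X) * d⁄dX ℤ (X * catalanGF) * hsq

theorem two_mul_coeff_redexGF (m : ℕ) :
    2 * coeff (m + 3) redexGF = (m + 4) * catalan (m + 3) - 5 * ((m + 3) * catalan (m + 2))
      + 6 * ((m + 2) * catalan (m + 1)) - 2 * ((m + 1) * catalan m) := by
  set D := d⁄dX ℤ (X * catalanGF) with hD
  -- numerals as `C k`, so that `coeff_C_mul` extracts them
  have h : C 2 * redexGF = D - C 5 * (X ^ 1 * D) + C 6 * (X ^ 2 * D) - C 2 * (X ^ 3 * D)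
      - (1 - C 3 * X + C 2 * X ^ 2) := by
    simp only [map_ofNat]
    linear_combination two_mul_redexGF
  have hc := congrArg (coeff (m + 3)) h
  simp only [map_sub, map_add, coeff_C_mul, coeff_X_pow_mul', coeff_one, coeff_X_pow,
    coeff_X] at hc
  norm_num at hc
  rw [hc, hD]
  simp only [coeff_derivative_X_mul_catalanGF]
  push_cast
  ring

theorem tcount_eq_catalan {n : ℕ} (hn : n ≠ 0) : tcount n = catalan n := by
  have h := congrArg (coeff n) termGF_add_one
  simp only [map_add, coeff_one, hn, if_false, add_zero, coeff_catalanGF, termGF,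
    coeff_sizeGF, sum_const, card_univ, nsmul_eq_mul, mul_one] at h
  rw [tcount, Nat.card_eq_fintype_card]
  exact_mod_cast h

theorem expectTm_eq_sum_div (f : Tm → ℕ) (hf : ∀ a, f a ≤ a.size) (n : ℕ) :
    expectTm f n = (∑ a : {a : Tm // a.size = n}, (f a : ℝ)) / tcount n := by
  have hcard (k : ℕ) :
      Nat.card {a : Tm // a.size = n ∧ f a = k} = #{a : {a : Tm // a.size = n} | f a = k} := by
    rw [← Nat.card_congr (Equiv.subtypeSubtypeEquivSubtypeInter _ _), Nat.card_eq_fintype_card,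
      Fintype.card_subtype]
  have hmaps (a : {a : Tm // a.size = n}) : f a ∈ range (n + 1) := by
    simpa [Nat.lt_succ_iff, a.2] using hf a
  rw [expectTm, ← sum_fiberwise_of_maps_to fun a _ => hmaps a]
  congr 1
  refine sum_congr rfl fun k _ => ?_
  rw [hcard, sum_congr rfl fun a ha => by rw [(mem_filter.1 ha).2], sum_const, nsmul_eq_mul,
    mul_comm]

theorem expectTm_betaCount_add_three (m : ℕ) :
    expectTm Tm.betaCount (m + 3)
      = m * (m + 4) * (3 * m ^ 2 + 4 * m + 5) / (8 * (2 * m + 1) * (2 * m + 3) * (2 * m + 5)) := by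
  rw [expectTm_eq_sum_div _ Tm.betaCount_le_size, tcount_eq_catalan (by omega)]
  have hS : 2 * ∑ a : {a : Tm // a.size = m + 3}, (a.1.betaCount : ℝ)
      = (m + 4) * catalan (m + 3) - 5 * ((m + 3) * catalan (m + 2))
        + 6 * ((m + 2) * catalan (m + 1)) - 2 * ((m + 1) * catalan m) := by
    have h := two_mul_coeff_redexGF m
    rw [redexGF, coeff_sizeGF] at h
    exact_mod_cast h
  set S := ∑ a : {a : Tm // a.size = m + 3}, (a.1.betaCount : ℝ)
  have hc (k : ℕ) : (catalan (k + 1) : ℝ) = 2 * (2 * k + 1) / (k + 2) * catalan k := by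
    rw [div_mul_eq_mul_div, eq_div_iff (by positivity), mul_comm]
    exact_mod_cast add_two_mul_catalan_succ k
  have hpos : (0 : ℝ) < catalan m := by exact_mod_cast catalan_pos m
  rw [← mul_div_cancel_left₀ S two_ne_zero, hS, hc (m + 2), hc (m + 1), hc m]
  push_cast
  field_simp
  ring

theorem tendsto_expectTm_betaCount_add_three_div :
    Tendsto (fun m : ℕ => expectTm Tm.betaCount (m + 3) / ((m + 3 : ℕ) : ℝ)) atTop
      (nhds (3 / 64)) := by
  -- the mean divided by `m + 3` is `r (1 / m)`
  let r : ℝ → ℝ := fun x =>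
    (1 + 4 * x) * (3 + 4 * x + 5 * x ^ 2) / (8 * (2 + x) * (2 + 3 * x) * (2 + 5 * x) * (1 + 3 * x))
  have hr : ContinuousAt r 0 := by fun_prop (disch := norm_num)
  have hlim := hr.tendsto.comp tendsto_one_div_atTop_nhds_zero_nat
  rw [show r 0 = 3 / 64 by norm_num [r]] at hlim
  refine hlim.congr' ?_
  filter_upwards [eventually_ne_atTop 0] with m hm
  simp only [Function.comp, r, expectTm_betaCount_add_three]
  push_cast
  field_simp

/-- the expected number of β-redexes in a random λυ-term of size n,
divided by n, tends to 3/64. -/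
theorem stmt14 :
    Tendsto (fun n : ℕ => expectTm Tm.betaCount n / (n : ℝ)) atTop (nhds (3 / 64)) :=
  (tendsto_add_atTop_iff_nat 3).1 tendsto_expectTm_betaCount_add_three_div
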